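/- Let M = (ρ, E) be a matroid. Then for every subset X ⊆ E, both cl(cyc(X)) and cyc(cl(X)) are cyclic flats of M. -/

import Mathlib

/-- A matroid presented by its rank function `rk : 2^E → ℤ`, satisfying the rank
axioms (R.1) `0 ≤ rk X ≤ |X|`, (R.2) monotonicity, and (R.3) submodularity. -/
structure RkMatroid (E : Type) [DecidableEq E] where
  rk : Finset E → ℤ
  rk_nonneg : ∀ X : Finset E, 0 ≤ rk X
  rk_le_card : ∀ X : Finset E, rk X ≤ (X.card : ℤ)
  rk_mono : ∀ ⦃X Y : Finset E⦄, X ⊆ Y → rk X ≤ rk Y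
  rk_submod : ∀ X Y : Finset E, rk (X ∪ Y) + rk (X ∩ Y) ≤ rk X + rk Y

variable {E : Type} [Fintype E] [DecidableEq E]

/-- The closure operator of the matroid `M`:
`cl(X) = X ∪ {e ∈ E - X : ρ(X ∪ e) = ρ(X)}`. -/
def cl (M : RkMatroid E) (X : Finset E) : Finset E :=
  X ∪ (Finset.univ \ X).filter fun e => M.rk (insert e X) = M.rk X

/-- The cyclic operator of the matroid `M`: `cyc(X) = {e ∈ X : ρ(X - e) = ρ(X)}`. -/
def cyc (M : RkMatroid E) (X : Finset E) : Finset E :=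
  X.filter fun e => M.rk (X.erase e) = M.rk X

/-- `Z` is a cyclic flat of the matroid with rank function `rk` on ground set `E`:
`rk (Z ∪ y) > rk Z` for all `y ∈ E - Z`, and `rk (Z - x) = rk Z` for all `x ∈ Z`. -/
def IsCyclicFlat (rk : Finset E → ℤ) (Z : Finset E) : Prop :=
  (∀ y ∈ Finset.univ \ Z, rk Z < rk (insert y Z)) ∧
  (∀ x ∈ Z, rk (Z.erase x) = rk Z)

open Finset

namespace RkMatroid

lemma rk_union_le (M : RkMatroid E) (A B : Finset E) :
    M.rk (A ∪ B) ≤ M.rk A + M.rk B := by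
  have h := M.rk_submod A B
  have h2 := M.rk_nonneg (A ∩ B)
  linarith

lemma rk_insert_le (M : RkMatroid E) (A : Finset E) (e : E) :
    M.rk (insert e A) ≤ M.rk A + 1 := by
  have h : A ∪ {e} = insert e A := by rw [insert_eq, union_comm]
  have h1 := M.rk_union_le A {e}
  have h2 : M.rk {e} ≤ 1 := by simpa using M.rk_le_card {e}
  rw [h] at h1; linarith

lemma rk_le_rk_insert (M : RkMatroid E) (A : Finset E) (e : E) :
    M.rk A ≤ M.rk (insert e A) := M.rk_mono (subset_insert _ _)

lemma rk_le_rk_erase_add_one (M : RkMatroid E) (A : Finset E) (e : E) :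
    M.rk A ≤ M.rk (A.erase e) + 1 := by
  have h : A ⊆ insert e (A.erase e) := by
    intro a ha
    by_cases hae : a = e
    · simp [hae]
    · exact mem_insert_of_mem (mem_erase.mpr ⟨hae, ha⟩)
  calc M.rk A ≤ M.rk (insert e (A.erase e)) := M.rk_mono h
    _ ≤ M.rk (A.erase e) + 1 := M.rk_insert_le _ _

lemma rk_erase_le (M : RkMatroid E) (A : Finset E) (e : E) :
    M.rk (A.erase e) ≤ M.rk A := M.rk_mono (erase_subset _ _)

/-- Spanning lemma: adding non-increasing elements doesn't change the rank. -/
lemma rk_union_eq (M : RkMatroid E) (X S : Finset E)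
    (h : ∀ e ∈ S, M.rk (insert e X) = M.rk X) : M.rk (X ∪ S) = M.rk X := by
  induction S using Finset.induction_on with
  | empty => simp
  | @insert e S he ih =>
    have hXS : M.rk (X ∪ S) = M.rk X := ih fun x hx => h x (mem_insert_of_mem hx)
    have he' : M.rk (insert e X) = M.rk X := h e (mem_insert_self _ _)
    have hu : (X ∪ S) ∪ insert e X = insert e (X ∪ S) := by
      rw [union_insert, union_right_comm, union_self]
    have hsub := M.rk_submod (X ∪ S) (insert e X)
    rw [hu] at hsub
    have hin : X ⊆ (X ∪ S) ∩ insert e X :=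
      subset_inter subset_union_left (subset_insert _ _)
    have hin' := M.rk_mono hin
    have hge : M.rk X ≤ M.rk (X ∪ insert e S) := M.rk_mono subset_union_left
    have hXi : X ∪ insert e S = insert e (X ∪ S) := union_insert _ _ _
    rw [hXi] at hge
    rw [hXi]
    omega

lemma rk_cl (M : RkMatroid E) (X : Finset E) : M.rk (cl M X) = M.rk X := by
  unfold cl
  exact M.rk_union_eq X _ fun e he => (mem_filter.mp he).2

lemma subset_cl (M : RkMatroid E) (X : Finset E) : X ⊆ cl M X :=
  subset_union_left

/-- Pointwise monotonicity of closure. -/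
lemma rk_insert_eq_of_subset (M : RkMatroid E) {C F : Finset E} (hCF : C ⊆ F) {y : E}
    (h : M.rk (insert y C) = M.rk C) : M.rk (insert y F) = M.rk F := by
  have hu : insert y C ∪ F = insert y F := by
    ext a; simp; have := @hCF a; tauto
  have hsub := M.rk_submod (insert y C) F
  rw [hu] at hsub
  have hin : C ⊆ insert y C ∩ F := subset_inter (subset_insert _ _) hCF
  have hin' := M.rk_mono hin
  have hge := M.rk_le_rk_insert F y
  omega

/-- P1: the closure is a flat. -/
lemma cl_flat (M : RkMatroid E) (X : Finset E) :
    ∀ y ∈ univ \ cl M X, M.rk (cl M X) < M.rk (insert y (cl M X)) := by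
  intro y hy
  rw [mem_sdiff] at hy
  rcases lt_or_eq_of_le (M.rk_le_rk_insert (cl M X) y) with h | h
  · exact h
  exfalso
  have h1 : M.rk (insert y X) ≤ M.rk (insert y (cl M X)) :=
    M.rk_mono (insert_subset_insert _ (M.subset_cl X))
  rw [← h, M.rk_cl] at h1
  have h2 := M.rk_le_rk_insert X y
  have hyX : y ∉ X := fun hx => hy.2 (M.subset_cl X hx)
  have : y ∈ cl M X := by
    unfold cl
    exact mem_union_right _ (mem_filter.mpr ⟨mem_sdiff.mpr ⟨mem_univ _, hyX⟩, le_antisymm h1 h2⟩)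
  exact hy.2 this

/-- P2: cyc of a closure is a flat. -/
lemma cyc_cl_flat (M : RkMatroid E) (X : Finset E) :
    ∀ y ∈ univ \ cyc M (cl M X), M.rk (cyc M (cl M X)) < M.rk (insert y (cyc M (cl M X))) := by
  intro y hy
  rw [mem_sdiff] at hy
  set F := cl M X with hF
  set C := cyc M F with hC
  have hCF : C ⊆ F := filter_subset _ _
  rcases lt_or_eq_of_le (M.rk_le_rk_insert C y) with h | h
  · exact h
  exfalso
  by_cases hyF : y ∈ F
  · -- y is a coloop of F
    have hyC : y ∉ C := hy.2
    have hne : ¬ (M.rk (F.erase y) = M.rk F) := by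
      intro hEq
      exact hyC (mem_filter.mpr ⟨hyF, hEq⟩)
    have h1 := M.rk_erase_le F y
    have h2 := M.rk_le_rk_erase_add_one F y
    have hCe : C ⊆ F.erase y := fun a ha =>
      mem_erase.mpr ⟨fun hay => hyC (hay ▸ ha), hCF ha⟩
    have h3 := M.rk_insert_eq_of_subset hCe h.symm
    rw [insert_erase hyF] at h3
    omega
  · have h3 := M.rk_insert_eq_of_subset hCF h.symm
    have h4 := M.cl_flat X y (mem_sdiff.mpr ⟨mem_univ _, hyF⟩)
    rw [← hF] at h4
    omega

/-- The dual matroid. -/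
def dual (M : RkMatroid E) : RkMatroid E where
  rk A := (A.card : ℤ) + M.rk (univ \ A) - M.rk univ
  rk_nonneg A := by
    have hu : (univ \ A) ∪ A = univ := sdiff_union_of_subset (subset_univ A)
    have h1 := M.rk_union_le (univ \ A) A
    rw [hu] at h1
    have h2 := M.rk_le_card A
    linarith
  rk_le_card A := by
    have := M.rk_mono (subset_univ (univ \ A))
    linarith
  rk_mono X Y hXY := by
    have hd : univ \ X = (univ \ Y) ∪ (Y \ X) := by
      ext a; simp <;> tauto
    have h1 := M.rk_union_le (univ \ Y) (Y \ X)
    rw [← hd] at h1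
    have h2 := M.rk_le_card (Y \ X)
    have h3 : (Y \ X).card + X.card = Y.card := card_sdiff_add_card_eq_card hXY
    have h3' : ((Y \ X).card : ℤ) + X.card = Y.card := by exact_mod_cast h3
    linarith
  rk_submod X Y := by
    have hc : (X ∪ Y).card + (X ∩ Y).card = X.card + Y.card :=
      card_union_add_card_inter X Y
    have hc' : ((X ∪ Y).card : ℤ) + (X ∩ Y).card = X.card + Y.card := by exact_mod_cast hc
    have h1 : univ \ (X ∪ Y) = (univ \ X) ∩ (univ \ Y) := by ext a; simp <;> tauto
    have h2 : univ \ (X ∩ Y) = (univ \ X) ∪ (univ \ Y) := by ext a; simp <;> tauto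
    have h3 := M.rk_submod (univ \ X) (univ \ Y)
    rw [← h1, ← h2] at h3
    linarith

lemma mem_cl_iff (M : RkMatroid E) (X : Finset E) (e : E) :
    e ∈ cl M X ↔ e ∈ X ∨ M.rk (insert e X) = M.rk X := by
  simp [cl]
  tauto

lemma mem_cyc_iff (M : RkMatroid E) (X : Finset E) (e : E) :
    e ∈ cyc M X ↔ e ∈ X ∧ M.rk (X.erase e) = M.rk X := by
  simp [cyc]

/-- Identity 1: `cl` in the dual is the complement of `cyc`. -/
lemma cl_dual (M : RkMatroid E) (X : Finset E) :
    cl (dual M) (univ \ X) = univ \ cyc M X := by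
  ext e
  rw [mem_cl_iff, mem_sdiff, mem_sdiff, mem_cyc_iff]
  by_cases he : e ∈ X
  · have he1 : e ∉ univ \ X := by simp [he]
    have hc : ((insert e (univ \ X)).card : ℤ) = ((univ \ X).card : ℤ) + 1 := by
      rw [card_insert_of_notMem he1]; push_cast; ring
    have hcompl : univ \ insert e (univ \ X) = X.erase e := by
      ext a; simp [mem_erase] <;> tauto
    have hcompl2 : univ \ (univ \ X) = X := by ext a; simp
    have hL : (dual M).rk (insert e (univ \ X))
        = ((univ \ X).card : ℤ) + 1 + M.rk (X.erase e) - M.rk univ := by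
      simp only [dual]; rw [hc, hcompl]
    have hR : (dual M).rk (univ \ X)
        = ((univ \ X).card : ℤ) + M.rk X - M.rk univ := by
      simp only [dual]; rw [hcompl2]
    have h1 := M.rk_erase_le X e
    have h2 := M.rk_le_rk_erase_add_one X e
    have hiff : ((dual M).rk (insert e (univ \ X)) = (dual M).rk (univ \ X))
        ↔ ¬ (M.rk (X.erase e) = M.rk X) := by
      rw [hL, hR]; omega
    simp [he, hiff]
  · simp [he]

/-- Identity 2: `cyc` in the dual is the complement of `cl`. -/
lemma cyc_dual (M : RkMatroid E) (Y : Finset E) :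
    cyc (dual M) (univ \ Y) = univ \ cl M Y := by
  ext e
  rw [mem_cyc_iff, mem_sdiff, mem_sdiff, mem_cl_iff]
  by_cases he : e ∈ Y
  · simp [he]
  · have he1 : e ∈ univ \ Y := by simp [he]
    have he2 : e ∉ (univ \ Y).erase e := notMem_erase _ _
    have hc : ((univ \ Y).card : ℤ) = (((univ \ Y).erase e).card : ℤ) + 1 := by
      conv_lhs => rw [← insert_erase he1]
      rw [card_insert_of_notMem he2]; push_cast; ring
    have hcompl : univ \ ((univ \ Y).erase e) = insert e Y := by
      ext a; simp [mem_erase] <;> tauto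
    have hcompl2 : univ \ (univ \ Y) = Y := by ext a; simp
    have hL : (dual M).rk ((univ \ Y).erase e)
        = ((univ \ Y).card : ℤ) - 1 + M.rk (insert e Y) - M.rk univ := by
      simp only [dual]; rw [hcompl]; omega
    have hR : (dual M).rk (univ \ Y)
        = ((univ \ Y).card : ℤ) + M.rk Y - M.rk univ := by
      simp only [dual]; rw [hcompl2]
    have h1 := M.rk_le_rk_insert Y e
    have h2 := M.rk_insert_le Y e
    have hiff : ((dual M).rk ((univ \ Y).erase e) = (dual M).rk (univ \ Y))
        ↔ ¬ (M.rk (insert e Y) = M.rk Y) := by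
      rw [hL, hR]; omega
    simp [he, hiff]

/-- Flatness in the dual of the complement gives the cyclic property. -/
lemma cyclic_of_dual_flat (M : RkMatroid E) (Z : Finset E)
    (h : ∀ y ∈ univ \ (univ \ Z), (dual M).rk (univ \ Z) < (dual M).rk (insert y (univ \ Z))) :
    ∀ x ∈ Z, M.rk (Z.erase x) = M.rk Z := by
  intro x hx
  have hx' : x ∈ univ \ (univ \ Z) := by simp [hx]
  have hzx : x ∉ univ \ Z := by simp [hx]
  have hspec := h x hx'
  have hc : (insert x (univ \ Z)).card = (univ \ Z).card + 1 :=
    card_insert_of_notMem hzx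
  have hcompl : univ \ insert x (univ \ Z) = Z.erase x := by
    ext a; simp [mem_erase] <;> tauto
  have hcompl2 : univ \ (univ \ Z) = Z := by ext a; simp
  simp only [dual] at hspec
  rw [hc, hcompl, hcompl2] at hspec
  have h1 := M.rk_erase_le Z x
  push_cast at hspec
  omega

end RkMatroid

/-- For every subset `X ⊆ E`, both `cl(cyc(X))` and `cyc(cl(X))` are
cyclic flats of `M`. -/
theorem stmt_10 (M : RkMatroid E) (X : Finset E) :
    IsCyclicFlat M.rk (cl M (cyc M X)) ∧ IsCyclicFlat M.rk (cyc M (cl M X)) := by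
  constructor
  · constructor
    · exact M.cl_flat (cyc M X)
    · apply M.cyclic_of_dual_flat
      have h := (RkMatroid.dual M).cyc_cl_flat (Finset.univ \ X)
      rw [RkMatroid.cl_dual, RkMatroid.cyc_dual] at h
      exact h
  · constructor
    · exact M.cyc_cl_flat X
    · apply M.cyclic_of_dual_flat
      have h := (RkMatroid.dual M).cl_flat (cyc (RkMatroid.dual M) (Finset.univ \ X))
      rw [RkMatroid.cyc_dual, RkMatroid.cl_dual] at h
      exact h
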